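/- Let V be a vertex operator algebra and n ∈ ℕ with n > 0. Then for all u, v ∈ V, u *_n v ≡ u *_{n−1} v modulo O_{n−1}(V). -/

import Mathlib

noncomputable section

open scoped BigOperators

/-- The generalized binomial coefficient `C(m, k)` for `m : ℤ`, as a complex number. -/
def cchoose (m : ℤ) (k : ℕ) : ℂ :=
  (∏ i ∈ Finset.range k, ((m : ℂ) - (i : ℂ))) / (k.factorial : ℂ)

/-- A grading-restricted vertex algebra structure on a complex vector space `V`,
presented via the projections `proj n` onto the weight spaces `V_(n)` and the
modes `mode u n = u_n` of the vertex operator `Y(u,x) = ∑ u_n x^{-n-1}`. -/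
structure GRVertexAlgebra (V : Type) [AddCommGroup V] [Module ℂ V] : Type where
  /-- projection onto the weight-`n` subspace `V_(n)` -/
  proj : ℤ → V →ₗ[ℂ] V
  /-- `mode u n v = u_n v` -/
  mode : V → ℤ → V → V
  /-- the vacuum vector `𝟙` -/
  one : V
  mode_add_left : ∀ (u u' : V) (n : ℤ) (v : V),
    mode (u + u') n v = mode u n v + mode u' n v
  mode_smul_left : ∀ (c : ℂ) (u : V) (n : ℤ) (v : V),
    mode (c • u) n v = c • mode u n v
  mode_add_right : ∀ (u : V) (n : ℤ) (v v' : V),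
    mode u n (v + v') = mode u n v + mode u n v'
  mode_smul_right : ∀ (u : V) (n : ℤ) (c : ℂ) (v : V),
    mode u n (c • v) = c • mode u n v
  proj_idem : ∀ (m n : ℤ) (v : V), proj m (proj n v) = if m = n then proj n v else 0
  proj_support_finite : ∀ v : V, (Function.support fun n : ℤ => proj n v).Finite
  proj_sum : ∀ v : V, (∑ᶠ n : ℤ, proj n v) = v
  /-- each weight space is finite dimensional -/
  grading_finite_dim : ∀ n : ℤ, FiniteDimensional ℂ (LinearMap.range (proj n))
  /-- the grading is bounded below -/
  grading_bounded_below : ∃ N : ℤ, ∀ n : ℤ, n < N → proj n = 0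
  /-- lower truncation: `u_n v = 0` for `n` sufficiently large -/
  lower_trunc : ∀ u v : V, ∃ N : ℤ, ∀ n : ℤ, N ≤ n → mode u n v = 0
  /-- the vacuum is homogeneous of weight `0` -/
  one_homogeneous : proj 0 one = one
  /-- identity property `Y(𝟙,x) = 1` -/
  identity_prop : ∀ (n : ℤ) (v : V), mode one n v = if n = -1 then v else 0
  /-- creation property, regular part -/
  creation : ∀ (u : V) (n : ℤ), 0 ≤ n → mode u n one = 0
  /-- creation property, constant term: `lim_{x→0} Y(u,x)𝟙 = u` -/
  creation_limit : ∀ u : V, mode u (-1) one = u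
  /-- the Jacobi identity, in terms of modes -/
  jacobi : ∀ (a b c : V) (l m n : ℤ),
      (∑ᶠ i : ℕ, cchoose m i • mode (mode a (l + i) b) (m + n - i) c)
    = (∑ᶠ i : ℕ, ((-1 : ℂ) ^ (i : ℕ) * cchoose l i) • mode a (m + l - i) (mode b (n + i) c))
      - (∑ᶠ i : ℕ, ((-1 : ℂ) ^ (l + i : ℤ) * cchoose l i) •
          mode b (n + l - i) (mode a (m + i) c))
  /-- `L(0)`-bracket formula, where `L(0) v = ∑ n • proj n v` -/
  L0_bracket : ∀ (a v : V) (n : ℤ),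
      (∑ᶠ m : ℤ, (m : ℂ) • proj m (mode a n v)) - mode a n (∑ᶠ m : ℤ, (m : ℂ) • proj m v)
    = mode (∑ᶠ m : ℤ, (m : ℂ) • proj m a) n v + (-(n : ℂ) - 1) • mode a n v
  /-- `L(-1)`-derivative formula, where `L(-1) u = u_{-2} 𝟙`:
  `Y(L(-1)u, x) = (d/dx) Y(u,x)` -/
  Lneg1_deriv : ∀ (u v : V) (n : ℤ),
      mode (mode u (-2) one) n v = (-(n : ℂ)) • mode u (n - 1) v
  /-- `L(-1)`-bracket formula: `[L(-1), Y(u,x)] = Y(L(-1)u, x)` -/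
  Lneg1_bracket : ∀ (u v : V) (n : ℤ),
      mode (mode u n v) (-2) one - mode u n (mode v (-2) one)
    = mode (mode u (-2) one) n v

namespace GRVertexAlgebra

variable {V : Type} [AddCommGroup V] [Module ℂ V]

/-- The operator `L(0)`. -/
def L0op (VA : GRVertexAlgebra V) (v : V) : V := ∑ᶠ m : ℤ, (m : ℂ) • VA.proj m v

/-- The operator `L(-1)`. -/
def Lneg1op (VA : GRVertexAlgebra V) (v : V) : V := VA.mode v (-2) VA.one

/-- `u` is homogeneous (of some weight). -/
def Homogeneous (VA : GRVertexAlgebra V) (u : V) : Prop := ∃ w : ℤ, VA.proj w u = u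

lemma mode_zero_left (VA : GRVertexAlgebra V) (n : ℤ) (v : V) : VA.mode 0 n v = 0 := by
  simpa using VA.mode_smul_left 0 0 n v

lemma mode_zero_right (VA : GRVertexAlgebra V) (u : V) (n : ℤ) : VA.mode u n 0 = 0 := by
  simpa using VA.mode_smul_right u n 0 0

/-- `Res_x x^N (1+x)^{l + L(0)-weight} Y(u, x) v`, i.e. the residue
`Res_x x^N (1+x)^l Y((1+x)^{L(0)} u, x) v`, expressed in terms of modes and the
homogeneous components of `u`. -/
def resPow (VA : GRVertexAlgebra V) (N l : ℤ) (u v : V) : V :=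
  ∑ᶠ m : ℤ, ∑ᶠ i : ℕ, cchoose (l + m) i • VA.mode (VA.proj m u) (N + i) v

end GRVertexAlgebra

section UInf

variable (V : Type) [AddCommGroup V] [Module ℂ V]

/-- The space of column-finite `ℕ × ℕ` matrices with entries in `V`, as a submodule of
the space of all doubly indexed families. -/
def UInfSub : Submodule ℂ (ℕ → ℕ → V) where
  carrier := {A | ∀ l : ℕ, (Function.support fun k => A k l).Finite}
  add_mem' := by
    intro A B hA hB l
    refine Set.Finite.subset ((hA l).union (hB l)) ?_
    intro k hk
    by_contra h
    simp only [Set.mem_union, Function.mem_support, not_or, not_not] at h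
    exact hk (by simp [Pi.add_apply, h.1, h.2])
  zero_mem' := by
    intro l
    simp [Function.support]
  smul_mem' := by
    intro c A hA l
    refine Set.Finite.subset (hA l) ?_
    intro k hk
    by_contra h
    simp only [Function.mem_support, not_not] at h
    exact hk (by simp [Pi.smul_apply, h])

/-- `U^∞(V)`: column-finite `ℕ × ℕ` matrices with entries in `V`. -/
def UInf : Type := ↥(UInfSub V)

instance : AddCommGroup (UInf V) := by unfold UInf; infer_instance
instance : Module ℂ (UInf V) := by unfold UInf; infer_instance

end UInf

namespace GRVertexAlgebra

variable {V : Type} [AddCommGroup V] [Module ℂ V]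

/-- `[v]_{kl} = v ⊗ E_{kl}`, the matrix with entry `v` in position `(k,l)` and `0` elsewhere. -/
def Usingle (v : V) (k l : ℕ) : UInf V :=
  ⟨fun k' l' => if k' = k ∧ l' = l then v else 0, by
    intro l'
    refine Set.Finite.subset (Set.finite_singleton k) ?_
    intro k' hk'
    simp only [Function.mem_support] at hk'
    by_contra h
    simp only [Set.mem_singleton_iff] at h
    exact hk' (by simp [h])⟩

/-- The `(k,l)` entry of the product `[u]_{kn} ⋄ [v]_{nl}`:
`∑_{m=0}^{n} C(-k+n-l-1, m) Res_x x^{-k+n-l-m-1} (1+x)^l Y((1+x)^{L(0)} u, x) v`. -/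
def diamondEntry (VA : GRVertexAlgebra V) (u v : V) (k n l : ℕ) : V :=
  ∑ m ∈ Finset.range (n + 1),
    cchoose (-(k : ℤ) + n - l - 1) m • VA.resPow (-(k : ℤ) + n - l - m - 1) l u v

lemma resPow_zero_left (VA : GRVertexAlgebra V) (N l : ℤ) (v : V) :
    VA.resPow N l 0 v = 0 := by
  unfold GRVertexAlgebra.resPow
  have h : ∀ m : ℤ, (∑ᶠ i : ℕ, cchoose (l + m) i • VA.mode (VA.proj m (0 : V)) (N + i) v) = 0 := by
    intro m
    have : ∀ i : ℕ, cchoose (l + m) i • VA.mode (VA.proj m (0 : V)) (N + i) v = 0 := by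
      intro i
      rw [map_zero, VA.mode_zero_left]
      simp
    simp only [this]
    exact finsum_zero
  simp only [h]
  exact finsum_zero

lemma resPow_zero_right (VA : GRVertexAlgebra V) (N l : ℤ) (u : V) :
    VA.resPow N l u 0 = 0 := by
  unfold GRVertexAlgebra.resPow
  have h : ∀ m : ℤ, (∑ᶠ i : ℕ, cchoose (l + m) i • VA.mode (VA.proj m u) (N + i) (0 : V)) = 0 := by
    intro m
    have : ∀ i : ℕ, cchoose (l + m) i • VA.mode (VA.proj m u) (N + i) (0 : V) = 0 := by
      intro i
      rw [VA.mode_zero_right]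
      simp
    simp only [this]
    exact finsum_zero
  simp only [h]
  exact finsum_zero

lemma diamondEntry_zero_left (VA : GRVertexAlgebra V) (v : V) (k n l : ℕ) :
    VA.diamondEntry 0 v k n l = 0 := by
  unfold GRVertexAlgebra.diamondEntry
  simp [VA.resPow_zero_left]

lemma diamondEntry_zero_right (VA : GRVertexAlgebra V) (u : V) (k n l : ℕ) :
    VA.diamondEntry u 0 k n l = 0 := by
  unfold GRVertexAlgebra.diamondEntry
  simp [VA.resPow_zero_right]

/-- The product `⋄` on `U^∞(V)`. -/
def udiamond (VA : GRVertexAlgebra V) (A B : UInf V) : UInf V :=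
  ⟨fun k l => ∑ᶠ n : ℕ, VA.diamondEntry (A.1 k n) (B.1 n l) k n l, by
    intro l
    refine Set.Finite.subset
      (Set.Finite.biUnion (B.2 l) (fun n _ => A.2 n)) ?_
    intro k hk
    simp only [Function.mem_support] at hk
    by_contra h
    apply hk
    have hterm : ∀ n : ℕ, VA.diamondEntry (A.1 k n) (B.1 n l) k n l = 0 := by
      intro n
      by_cases hB : B.1 n l = 0
      · rw [hB]; exact VA.diamondEntry_zero_right _ _ _ _
      · have hA : A.1 k n = 0 := by
          by_contra hA
          exact h (Set.mem_biUnion (by exact hB) (by exact hA))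
        rw [hA]; exact VA.diamondEntry_zero_left _ _ _ _
    simp only [hterm]
    exact finsum_zero⟩

end GRVertexAlgebra
/-- A lower-bounded generalized module for a grading-restricted vertex algebra,
presented via the mode action `wmode`, the projections `wproj μ` onto the
(generalized-eigenvalue) weight spaces `W_(μ)`, and the operators `L_W(0)`, `L_W(-1)`. -/
structure LBGModule {V : Type} [AddCommGroup V] [Module ℂ V]
    (VA : GRVertexAlgebra V) (W : Type) [AddCommGroup W] [Module ℂ W] : Type where
  /-- `wmode u n w = u_n w`, the modes of `Y_W(u,x) = ∑ u_n x^{-n-1}` -/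
  wmode : V → ℤ → W → W
  /-- projection onto the weight-`μ` subspace `W_(μ)` -/
  wproj : ℂ → W →ₗ[ℂ] W
  /-- the operator `L_W(0)` -/
  LW0 : W →ₗ[ℂ] W
  /-- the operator `L_W(-1)` -/
  LW1 : W →ₗ[ℂ] W
  wmode_add_left : ∀ (u u' : V) (n : ℤ) (w : W),
    wmode (u + u') n w = wmode u n w + wmode u' n w
  wmode_smul_left : ∀ (c : ℂ) (u : V) (n : ℤ) (w : W),
    wmode (c • u) n w = c • wmode u n w
  wmode_add_right : ∀ (u : V) (n : ℤ) (w w' : W),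
    wmode u n (w + w') = wmode u n w + wmode u n w'
  wmode_smul_right : ∀ (u : V) (n : ℤ) (c : ℂ) (w : W),
    wmode u n (c • w) = c • wmode u n w
  wproj_idem : ∀ (μ ν : ℂ) (w : W), wproj μ (wproj ν w) = if μ = ν then wproj ν w else 0
  wproj_support_finite : ∀ w : W, (Function.support fun μ : ℂ => wproj μ w).Finite
  wproj_sum : ∀ w : W, (∑ᶠ μ : ℂ, wproj μ w) = w
  /-- the grading is bounded below in real part -/
  grading_bounded_below : ∃ B : ℝ, ∀ μ : ℂ, μ.re < B → wproj μ = 0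
  /-- lower truncation -/
  lower_trunc : ∀ (u : V) (w : W), ∃ N : ℤ, ∀ n : ℤ, N ≤ n → wmode u n w = 0
  /-- identity property `Y_W(𝟙,x) = 1` -/
  identity_prop : ∀ (n : ℤ) (w : W), wmode VA.one n w = if n = -1 then w else 0
  /-- the Jacobi identity for the module -/
  jacobi : ∀ (a b : V) (w : W) (l m n : ℤ),
      (∑ᶠ i : ℕ, cchoose m i • wmode (VA.mode a (l + i) b) (m + n - i) w)
    = (∑ᶠ i : ℕ, ((-1 : ℂ) ^ (i : ℕ) * cchoose l i) • wmode a (m + l - i) (wmode b (n + i) w))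
      - (∑ᶠ i : ℕ, ((-1 : ℂ) ^ (l + i : ℤ) * cchoose l i) •
          wmode b (n + l - i) (wmode a (m + i) w))
  /-- `W_(μ)` is the generalized eigenspace of `L_W(0)` with eigenvalue `μ` -/
  gen_eigenspace : ∀ (μ : ℂ) (w : W),
    ∃ k : ℕ, (((LW0 - μ • LinearMap.id : Module.End ℂ W) ^ k) : W →ₗ[ℂ] W) (wproj μ w) = 0
  gen_eigenspace_mem : ∀ (μ : ℂ) (w : W),
    (∃ k : ℕ, (((LW0 - μ • LinearMap.id : Module.End ℂ W) ^ k) : W →ₗ[ℂ] W) w = 0) → wproj μ w = w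
  /-- `L_W(0)`-bracket formula -/
  LW0_bracket : ∀ (a : V) (w : W) (n : ℤ),
      LW0 (wmode a n w) - wmode a n (LW0 w)
    = wmode (∑ᶠ m : ℤ, (m : ℂ) • VA.proj m a) n w + (-(n : ℂ) - 1) • wmode a n w
  /-- `L_W(-1)`-derivative formula: `Y_W(L(-1)u, x) = (d/dx) Y_W(u,x)` -/
  LW1_deriv : ∀ (u : V) (w : W) (n : ℤ),
      wmode (VA.mode u (-2) VA.one) n w = (-(n : ℂ)) • wmode u (n - 1) w
  /-- `L_W(-1)`-bracket formula -/
  LW1_bracket : ∀ (u : V) (w : W) (n : ℤ),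
      LW1 (wmode u n w) - wmode u n (LW1 w) = wmode (VA.mode u (-2) VA.one) n w

namespace LBGModule

variable {V : Type} [AddCommGroup V] [Module ℂ V] {VA : GRVertexAlgebra V}
variable {W : Type} [AddCommGroup W] [Module ℂ W]

lemma wmode_zero_left (M : LBGModule VA W) (n : ℤ) (w : W) : M.wmode 0 n w = 0 := by
  simpa using M.wmode_smul_left 0 0 n w

lemma wmode_zero_right (M : LBGModule VA W) (u : V) (n : ℤ) : M.wmode u n 0 = 0 := by
  simpa using M.wmode_smul_right u n 0 0

/-- `Ω_n(W) = {w ∈ W : v_k w = 0 for homogeneous v with wt v - k - 1 < -n}`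
(for `n < 0` this is automatically `{0}`, matching `Ω_{-1}(W) = 0`). -/
def OmegaSet (M : LBGModule VA W) (n : ℤ) : Set W :=
  {w : W | ∀ (m k : ℤ) (v : V), m - k - 1 < -n → M.wmode (VA.proj m v) k w = 0}

/-- `ϑ_{Gr(W)}([v]_{kl})` applied to a representative `w`:
`Res_x x^{l-k-1} Y_W(x^{L(0)} v, x) w`. -/
def wAct (M : LBGModule VA W) (v : V) (k l : ℕ) (w : W) : W :=
  ∑ᶠ m : ℤ, M.wmode (VA.proj m v) ((l : ℤ) - (k : ℤ) - 1 + m) w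

end LBGModule

namespace GRVertexAlgebra

variable {V : Type} [AddCommGroup V] [Module ℂ V]

/-- Membership in `Q^∞(V)`: `A` acts as zero on `Gr(W)` for every lower-bounded
generalized `V`-module `W`.  Here the action of `A` on `[w]_n ∈ Gr_n(W)` has component
`[ϑ([A_{kn}]_{kn}) w]_k` in `Gr_k(W)`, which vanishes in `Gr_k(W) = Ω_k(W)/Ω_{k-1}(W)`
exactly when the representative lies in `Ω_{k-1}(W)`. -/
def memQ (VA : GRVertexAlgebra V) (A : UInf V) : Prop :=
  ∀ (W : Type) (_ : AddCommGroup W) (_ : Module ℂ W) (M : LBGModule VA W)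
    (n k : ℕ) (w : W), w ∈ M.OmegaSet n →
      M.wAct (A.1 k n) k n w ∈ M.OmegaSet ((k : ℤ) - 1)

/-- The generators of `O^∞_∘(V)` living in position `(k,l)`:
`Res_x x^{-k-l-p-2} (1+x)^l Y((1+x)^{L(0)} u, x) v`. -/
def circExpr (VA : GRVertexAlgebra V) (u v : V) (k l p : ℕ) : V :=
  VA.resPow (-(k : ℤ) - l - p - 2) l u v

/-- Membership in `O^∞_∘(V)`: each entry of `A` is a (finite) linear combination of the
generators `Res_x x^{-k-l-p-2} (1+x)^l [Y((1+x)^{L(0)} u, x) v]_{kl}`; since each generator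
is concentrated in a single position `(k,l)`, an infinite linear combination in which each
pair `(k,l)` appears only finitely many times is exactly a column-finite matrix each of whose
entries lies in the corresponding span. -/
def memOcirc (VA : GRVertexAlgebra V) (A : UInf V) : Prop :=
  ∀ k l : ℕ, A.1 k l ∈ Submodule.span ℂ
    {x : V | ∃ (u v : V) (p : ℕ), x = VA.circExpr u v k l p}

/-- The element `(L(-1) + L(0) + l - k) v`. -/
def LLExpr (VA : GRVertexAlgebra V) (k l : ℕ) (v : V) : V :=
  VA.Lneg1op v + VA.L0op v + (((l : ℂ) - (k : ℂ)) • v)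

/-- Membership in `O^∞(V)`. -/
def memO (VA : GRVertexAlgebra V) (A : UInf V) : Prop :=
  ∀ k l : ℕ, A.1 k l ∈ Submodule.span ℂ
    ({x : V | ∃ (u v : V) (p : ℕ), x = VA.circExpr u v k l p}
      ∪ {x : V | ∃ v : V, x = VA.LLExpr k l v})

end GRVertexAlgebra
namespace GRVertexAlgebra

variable {V : Type} [AddCommGroup V] [Module ℂ V]

/-- Huang's Jacobi-identity element of `U^∞(V)` attached to `u, v ∈ V` with `v`
homogeneous of weight `wtv`, and integers `k ∈ ℕ`, `l, p, n ∈ ℤ` with `l + p ∈ ℕ`: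
`∑_{j, n+p-j ≥ 0} (-1)^j C(p,j) [v]_{k,n+p-j} ⋄ [u]_{n+p-j,l+p}`
`- ∑_{j, l-n+k+p-j ≥ 0} (-1)^{p-j} C(p,j) [u]_{k,l-n+k+p-j} ⋄ [v]_{l-n+k+p-j,l+p}`
`- ∑_{j ∈ ℕ} C(wt v + n - k - 1, j) [v_{p+j} u]_{k,l+p}`. -/
def jElt (VA : GRVertexAlgebra V) (u v : V) (wtv : ℤ) (k : ℕ) (l p n : ℤ) : UInf V :=
  (∑ᶠ j : ℕ, if (j : ℤ) ≤ n + p then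
      ((-1 : ℂ) ^ (j : ℕ) * cchoose p j) •
        VA.udiamond (Usingle v k (n + p - j).toNat)
          (Usingle u (n + p - j).toNat (l + p).toNat)
    else 0)
  - (∑ᶠ j : ℕ, if (j : ℤ) ≤ l - n + (k : ℤ) + p then
      ((-1 : ℂ) ^ ((p : ℤ) - (j : ℤ)) * cchoose p j) •
        VA.udiamond (Usingle u k (l - n + (k : ℤ) + p - j).toNat)
          (Usingle v (l - n + (k : ℤ) + p - j).toNat (l + p).toNat)
    else 0)
  - Usingle (∑ᶠ j : ℕ, cchoose (wtv + n - (k : ℤ) - 1) j • VA.mode v (p + j) u)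
      k (l + p).toNat

/-- The `(k, l+p)` entry of the Jacobi-identity element `jElt`, written out in terms of
residues as in the paper. -/
def jEntry (VA : GRVertexAlgebra V) (u v : V) (wtv : ℤ) (k : ℕ) (l p n : ℤ) : V :=
  (∑ᶠ j : ℕ, if (j : ℤ) ≤ n + p then
      ((-1 : ℂ) ^ (j : ℕ) * cchoose p j) •
        VA.diamondEntry v u k (n + p - j).toNat (l + p).toNat
    else 0)
  - (∑ᶠ j : ℕ, if (j : ℤ) ≤ l - n + (k : ℤ) + p then
      ((-1 : ℂ) ^ ((p : ℤ) - (j : ℤ)) * cchoose p j) •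
        VA.diamondEntry u v k (l - n + (k : ℤ) + p - j).toNat (l + p).toNat
    else 0)
  - (∑ᶠ j : ℕ, cchoose (wtv + n - (k : ℤ) - 1) j • VA.mode v (p + j) u)

/-- The set of generating elements of `J^∞(V)`. -/
def JSet (VA : GRVertexAlgebra V) : Set (UInf V) :=
  {A : UInf V | ∃ (u v : V) (wtv : ℤ) (k : ℕ) (l p n : ℤ),
    VA.proj wtv v = v ∧ 0 ≤ l + p ∧ A = VA.jElt u v wtv k l p n}

/-- The set `O^∞(V)` of Huang, as a subset of `U^∞(V)`. -/
def OSet (VA : GRVertexAlgebra V) : Set (UInf V) := {A : UInf V | VA.memO A}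

end GRVertexAlgebra

/-- A vertex operator algebra: a grading-restricted vertex algebra together with a
conformal vector `ω` whose modes `L(n) = ω_{n+1}` give a representation of the Virasoro
algebra, recover the grading operator `L(0)`, and satisfy the `L(-1)`-property. -/
structure VertexOperatorAlgebra (V : Type) [AddCommGroup V] [Module ℂ V]
    extends GRVertexAlgebra V : Type where
  /-- the conformal vector -/
  omega : V
  /-- the central charge -/
  centralCharge : ℂ
  /-- the Virasoro relations for `L(n) = ω_{n+1}` -/
  virasoro : ∀ (m n : ℤ) (v : V),
      mode omega (m + 1) (mode omega (n + 1) v) - mode omega (n + 1) (mode omega (m + 1) v)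
    = ((m : ℂ) - (n : ℂ)) • mode omega (m + n + 1) v
      + (if m + n = 0 then (((m ^ 3 - m : ℤ) : ℂ) / 12) * centralCharge else 0) • v
  /-- `L(0) = ω_1` is the grading operator -/
  omega_L0 : ∀ v : V, mode omega 1 v = ∑ᶠ m : ℤ, (m : ℂ) • proj m v
  /-- `L(-1) = ω_0` -/
  omega_Lneg1 : ∀ v : V, mode omega 0 v = mode v (-2) one

namespace GRVertexAlgebra

variable {V : Type} [AddCommGroup V] [Module ℂ V]

/-- The circle product `u ∘_n v = Res_x (1+x)^{wt u + n} Y(u,x) v / x^{2n+2}`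
(for `u` homogeneous; `resPow` inserts the weight of each homogeneous component). -/
def circN (VA : GRVertexAlgebra V) (n : ℕ) (u v : V) : V :=
  VA.resPow (-(2 * (n : ℤ)) - 2) n u v

/-- The subspace `O_n(V)`, spanned by the `u ∘_n v` for homogeneous `u` and all `v`, and
by the `(L(-1) + L(0)) v`. -/
def ZhuO (VA : GRVertexAlgebra V) (n : ℕ) : Submodule ℂ V :=
  Submodule.span ℂ
    ({x : V | ∃ u v : V, VA.Homogeneous u ∧ x = VA.circN n u v}
      ∪ {x : V | ∃ v : V, x = VA.Lneg1op v + VA.L0op v})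

/-- The product `u *_n v` of Dong–Li–Mason (for `u` homogeneous, extended linearly):
`∑_{m=0}^{n} (-1)^m C(m+n, n) Res_x (1+x)^{wt u + n} Y(u,x) v / x^{n+m+1}`. -/
def starN (VA : GRVertexAlgebra V) (n : ℕ) (u v : V) : V :=
  ∑ m ∈ Finset.range (n + 1),
    ((-1 : ℂ) ^ (m : ℕ) * ((m + n).choose n : ℂ)) •
      VA.resPow (-(n : ℤ) - m - 1) n u v

end GRVertexAlgebra

/-- The monomial `α(-i_1) ⋯ α(-i_j) 𝟙` of the rank one Heisenberg vertex operator algebra,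
indexed by the multiset `{i_1, …, i_j}` of positive integers; here `a = α(-1)𝟙` so that
`α(m) = a_m`. -/
def heisMono {V : Type} [AddCommGroup V] [Module ℂ V]
    (VA : GRVertexAlgebra V) (a : V) (μ : Multiset ℕ+) : V :=
  (μ.sort (· ≤ ·)).foldr (fun i v => VA.mode a (-(i : ℤ)) v) VA.one

/-- The rank one Heisenberg vertex operator algebra `M(1)`: a vertex operator algebra
with a weight-one element `a = α(-1)𝟙` whose modes `α(m) = a_m` satisfy the rank one
Heisenberg relations (with the central element acting as `1`), such that the monomials
`α(-i_1) ⋯ α(-i_j) 𝟙` form a basis, and with conformal vector `ω = (1/2) α(-1)² 𝟙`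
of central charge `1`. -/
structure HeisenbergVOA (V : Type) [AddCommGroup V] [Module ℂ V]
    extends VertexOperatorAlgebra V : Type where
  /-- the element `a = α(-1)𝟙` -/
  a : V
  /-- `α(-1)𝟙` is homogeneous of weight one -/
  a_wt : proj 1 a = a
  /-- the Heisenberg commutation relations `[α(m), α(n)] = m δ_{m+n,0}` (`c` acts as `1`) -/
  heis_comm : ∀ (m n : ℤ) (v : V),
      mode a m (mode a n v) - mode a n (mode a m v)
    = if m + n = 0 then (m : ℂ) • v else 0
  /-- `M(1) ≃ S(ĥ⁻)` linearly: the monomials `α(-i_1)⋯α(-i_j)𝟙` form a basis -/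
  basis : Module.Basis (Multiset ℕ+) ℂ V
  basis_eq : ∀ μ : Multiset ℕ+, basis μ = heisMono toGRVertexAlgebra a μ
  omega_eq : omega = (1 / 2 : ℂ) • mode a (-1) a
  centralCharge_eq : centralCharge = 1

namespace HeisenbergVOA

variable {V : Type} [AddCommGroup V] [Module ℂ V]

/-- The element
`D_n = [α(-1)𝟙]_{nn} ⋄ [α(-1)𝟙]_{nn} - [α(-1)²𝟙]_{nn} + 2n [𝟙]_{nn}` of `U^∞(M(1))`. -/
def Delt (H : HeisenbergVOA V) (n : ℕ) : UInf V :=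
  H.udiamond (GRVertexAlgebra.Usingle H.a n n) (GRVertexAlgebra.Usingle H.a n n)
    - GRVertexAlgebra.Usingle (H.mode H.a (-1) H.a) n n
    + (2 * (n : ℂ)) • GRVertexAlgebra.Usingle H.one n n

end HeisenbergVOA

namespace LBGModule

variable {V : Type} [AddCommGroup V] [Module ℂ V]
variable {W : Type} [AddCommGroup W] [Module ℂ W]

/-- `Ω(W) = {w ∈ W : α(n) w = 0 for all n > 0}` for a module `W` over the rank one
Heisenberg vertex operator algebra. -/
def smallOmega (H : HeisenbergVOA V) (M : LBGModule H.toGRVertexAlgebra W) :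
    Submodule ℂ W where
  carrier := {w : W | ∀ n : ℤ, 0 < n → M.wmode H.a n w = 0}
  add_mem' := by
    intro w w' hw hw' n hn
    rw [M.wmode_add_right, hw n hn, hw' n hn, add_zero]
  zero_mem' := fun n _ => M.wmode_zero_right H.a n
  smul_mem' := by
    intro c w hw n hn
    rw [M.wmode_smul_right, hw n hn, smul_zero]

end LBGModule

section StarNAux

open Function

lemma cchoose_zero' (m : ℤ) : cchoose m 0 = 1 := by
  simp [cchoose]

lemma factorial_cast_ne (k : ℕ) : ((k.factorial : ℂ)) ≠ 0 := by
  exact_mod_cast Nat.factorial_ne_zero k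

lemma cchoose_pascal (m : ℤ) (k : ℕ) :
    cchoose (m + 1) (k + 1) = cchoose m (k + 1) + cchoose m k := by
  unfold cchoose
  have h1 : (∏ i ∈ Finset.range (k+1), (((m + 1 : ℤ) : ℂ) - (i : ℂ)))
      = (∏ i ∈ Finset.range k, ((m : ℂ) - (i : ℂ))) * ((m : ℂ) + 1) := by
    rw [Finset.prod_range_succ']
    congr 1
    · refine Finset.prod_congr rfl fun i _ => ?_
      push_cast; ring
    · push_cast; ring
  have h2 : (∏ i ∈ Finset.range (k+1), ((m : ℂ) - (i : ℂ)))
      = (∏ i ∈ Finset.range k, ((m : ℂ) - (i : ℂ))) * ((m : ℂ) - (k : ℂ)) :=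
    Finset.prod_range_succ _ _
  have h3 : (((k+1).factorial : ℕ) : ℂ) = (k.factorial : ℂ) * ((k : ℂ) + 1) := by
    rw [Nat.factorial_succ]; push_cast; ring
  rw [h1, h2, h3]
  have hk := factorial_cast_ne k
  have hk1 : ((k : ℂ) + 1) ≠ 0 := Nat.cast_add_one_ne_zero k
  field_simp
  ring

lemma cchoose_absorb (m : ℤ) (k : ℕ) :
    ((k : ℂ) + 1) * cchoose m (k + 1) = ((m : ℂ) - (k : ℂ)) * cchoose m k := by
  unfold cchoose
  rw [Finset.prod_range_succ, Nat.factorial_succ]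
  have hk := factorial_cast_ne k
  have hk1 : ((k : ℂ) + 1) ≠ 0 := Nat.cast_add_one_ne_zero k
  push_cast
  field_simp

lemma finsum_nat_eq_range {W : Type*} [AddCommMonoid W] (f : ℕ → W) (K : ℕ)
    (h : ∀ i : ℕ, K ≤ i → f i = 0) : ∑ᶠ i : ℕ, f i = ∑ i ∈ Finset.range K, f i := by
  apply finsum_eq_finset_sum_of_support_subset
  intro i hi
  simp only [Function.mem_support] at hi
  simp only [Finset.coe_range, Set.mem_Iio]
  by_contra hh
  exact hi (h i (by omega))

namespace GRVertexAlgebra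

variable {V : Type} [AddCommGroup V] [Module ℂ V] (VA : GRVertexAlgebra V)

lemma exists_mode_bound (w v : V) (N : ℤ) :
    ∃ K : ℕ, ∀ i : ℕ, K ≤ i → VA.mode w (N + i) v = 0 := by
  obtain ⟨N₀, hN₀⟩ := VA.lower_trunc w v
  refine ⟨(N₀ - N).toNat, fun i hi => hN₀ _ ?_⟩
  have h1 := Int.self_le_toNat (N₀ - N)
  have hi' : ((N₀ - N).toNat : ℤ) ≤ (i : ℤ) := by exact_mod_cast hi
  omega

lemma inner_eq_zero_of_proj_zero (u v : V) (N l m : ℤ) (h : VA.proj m u = 0) :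
    (∑ᶠ i : ℕ, cchoose (l + m) i • VA.mode (VA.proj m u) (N + i) v) = 0 := by
  rw [h]
  have h2 : ∀ i : ℕ, cchoose (l + m) i • VA.mode (0 : V) (N + (i : ℤ)) v = 0 := fun i => by
    rw [VA.mode_zero_left, smul_zero]
  simp only [h2]
  exact finsum_zero

lemma outer_support_finite (u v : V) (N l : ℤ) :
    (Function.support fun m : ℤ =>
      ∑ᶠ i : ℕ, cchoose (l + m) i • VA.mode (VA.proj m u) (N + i) v).Finite := by
  apply Set.Finite.subset (VA.proj_support_finite u)
  intro m hm
  simp only [Function.mem_support] at hm ⊢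
  intro h
  exact hm (VA.inner_eq_zero_of_proj_zero u v N l m h)

lemma resPow_proj (u v : V) (N l : ℤ) (h : ℤ) :
    VA.resPow N l (VA.proj h u) v
      = ∑ᶠ i : ℕ, cchoose (l + h) i • VA.mode (VA.proj h u) (N + i) v := by
  unfold GRVertexAlgebra.resPow
  rw [finsum_eq_single _ h (fun m hm => VA.inner_eq_zero_of_proj_zero _ v N l m
    (by rw [VA.proj_idem, if_neg hm]))]
  simp [VA.proj_idem]

lemma resPow_homog (u v : V) (N l h : ℤ) (hu : VA.proj h u = u) :
    VA.resPow N l u v = ∑ᶠ i : ℕ, cchoose (l + h) i • VA.mode u (N + i) v := by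
  conv_lhs => rw [← hu]
  rw [VA.resPow_proj, hu]

lemma resPow_decomp (u v : V) (N l : ℤ) :
    VA.resPow N l u v = ∑ᶠ m : ℤ, VA.resPow N l (VA.proj m u) v := by
  rw [show VA.resPow N l u v
      = ∑ᶠ m : ℤ, ∑ᶠ i : ℕ, cchoose (l + m) i • VA.mode (VA.proj m u) (N + i) v from rfl]
  exact finsum_congr fun m => (VA.resPow_proj u v N l m).symm

lemma resPow_mem (u v : V) (N l : ℤ) (S : Submodule ℂ V)
    (hS : ∀ m : ℤ, VA.resPow N l (VA.proj m u) v ∈ S) :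
    VA.resPow N l u v ∈ S := by
  rw [VA.resPow_decomp]
  have hfin : (Function.support fun m : ℤ => VA.resPow N l (VA.proj m u) v).Finite := by
    apply Set.Finite.subset (VA.outer_support_finite u v N l)
    intro m hm
    simp only [Function.mem_support] at hm ⊢
    rw [VA.resPow_proj] at hm
    exact hm
  rw [finsum_eq_sum _ hfin]
  exact Submodule.sum_mem _ fun m _ => hS m

lemma resPow_l_succ (u v : V) (N l : ℤ) :
    VA.resPow N (l + 1) u v = VA.resPow N l u v + VA.resPow (N + 1) l u v := by
  unfold GRVertexAlgebra.resPow
  rw [← finsum_add_distrib (VA.outer_support_finite u v N l)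
      (VA.outer_support_finite u v (N + 1) l)]
  refine finsum_congr fun m => ?_
  obtain ⟨K, hK⟩ := VA.exists_mode_bound (VA.proj m u) v N
  set w := VA.proj m u with hw
  have hK1 : ∀ i : ℕ, K ≤ i → VA.mode w (N + 1 + i) v = 0 := by
    intro i hi
    have e : N + 1 + (i : ℤ) = N + ((i + 1 : ℕ) : ℤ) := by push_cast; ring
    rw [e]; exact hK (i + 1) (by omega)
  have r1 : (∑ᶠ i : ℕ, cchoose (l + 1 + m) i • VA.mode w (N + i) v)
      = ∑ i ∈ Finset.range (K + 1), cchoose (l + 1 + m) i • VA.mode w (N + i) v :=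
    finsum_nat_eq_range _ _ (fun i hi => by rw [hK i (by omega), smul_zero])
  have r2 : (∑ᶠ i : ℕ, cchoose (l + m) i • VA.mode w (N + i) v)
      = ∑ i ∈ Finset.range (K + 1), cchoose (l + m) i • VA.mode w (N + i) v :=
    finsum_nat_eq_range _ _ (fun i hi => by rw [hK i (by omega), smul_zero])
  have r3 : (∑ᶠ i : ℕ, cchoose (l + m) i • VA.mode w (N + 1 + i) v)
      = ∑ i ∈ Finset.range (K + 1), cchoose (l + m) i • VA.mode w (N + 1 + i) v :=
    finsum_nat_eq_range _ _ (fun i hi => by rw [hK1 i (by omega), smul_zero])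
  rw [r1, r2, r3]
  have hsplit : ∀ i : ℕ, cchoose (l + 1 + m) i • VA.mode w (N + i) v
      = cchoose (l + m) i • VA.mode w (N + i) v
        + (if i = 0 then (0 : V) else cchoose (l + m) (i - 1) • VA.mode w (N + i) v) := by
    intro i
    cases i with
    | zero =>
        have e : l + 1 + m = (l + m) + 1 := by ring
        simp [e, cchoose_zero']
    | succ j =>
        have e : l + 1 + m = (l + m) + 1 := by ring
        rw [e, cchoose_pascal, add_smul]
        simp
  rw [Finset.sum_congr rfl (fun i _ => hsplit i), Finset.sum_add_distrib]
  congr 1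
  rw [Finset.sum_range_succ'
      (fun i => if i = 0 then (0 : V) else cchoose (l + m) (i - 1) • VA.mode w (N + i) v) K]
  simp only [Nat.succ_ne_zero, if_false, if_true, Nat.add_sub_cancel, add_zero]
  rw [Finset.sum_range_succ (fun i => cchoose (l + m) i • VA.mode w (N + 1 + i) v) K,
      hK1 K le_rfl, smul_zero, add_zero]
  refine Finset.sum_congr rfl fun i _ => ?_
  have e : N + ((i + 1 : ℕ) : ℤ) = N + 1 + (i : ℤ) := by push_cast; ring
  rw [e]

lemma L0op_support_finite (w : V) :
    (Function.support fun m : ℤ => (m : ℂ) • VA.proj m w).Finite := by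
  apply Set.Finite.subset (VA.proj_support_finite w)
  intro m hm
  simp only [Function.mem_support] at hm ⊢
  intro h
  exact hm (by rw [h, smul_zero])

lemma proj_L0op (w : V) (μ : ℤ) :
    VA.proj μ (VA.L0op w) = (μ : ℂ) • VA.proj μ w := by
  have hmap := (VA.proj μ).toAddMonoidHom.map_finsum (VA.L0op_support_finite w)
  simp only [LinearMap.toAddMonoidHom_coe] at hmap
  rw [show VA.L0op w = ∑ᶠ m : ℤ, (m : ℂ) • VA.proj m w from rfl, hmap]
  rw [finsum_eq_single _ μ (fun m hm => by
    rw [map_smul, VA.proj_idem, if_neg (Ne.symm hm), smul_zero])]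
  simp [VA.proj_idem]

lemma L0op_one : VA.L0op VA.one = 0 := by
  rw [show VA.L0op VA.one = ∑ᶠ m : ℤ, (m : ℂ) • VA.proj m VA.one from rfl]
  rw [finsum_eq_single _ 0 (fun m hm => by
    have h0 : VA.proj m VA.one = VA.proj m (VA.proj 0 VA.one) := by rw [VA.one_homogeneous]
    rw [h0, VA.proj_idem, if_neg hm, smul_zero])]
  simp

lemma L0op_homog (u : V) (h : ℤ) (hu : VA.proj h u = u) : VA.L0op u = (h : ℂ) • u := by
  rw [show VA.L0op u = ∑ᶠ m : ℤ, (m : ℂ) • VA.proj m u from rfl]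
  rw [finsum_eq_single _ h (fun m hm => by
    have h0 : VA.proj m u = 0 := by rw [← hu, VA.proj_idem, if_neg hm]
    rw [h0, smul_zero])]
  rw [hu]

lemma L0op_Lneg1op (u : V) (h : ℤ) (hu : VA.proj h u = u) :
    VA.L0op (VA.Lneg1op u) = ((h : ℂ) + 1) • VA.Lneg1op u := by
  have hb := VA.L0_bracket u VA.one (-2)
  have e1 : (∑ᶠ m : ℤ, (m : ℂ) • VA.proj m (VA.mode u (-2) VA.one)) = VA.L0op (VA.Lneg1op u) :=
    rfl
  have e2 : (∑ᶠ m : ℤ, (m : ℂ) • VA.proj m VA.one) = (0 : V) := VA.L0op_one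
  have e3 : (∑ᶠ m : ℤ, (m : ℂ) • VA.proj m u) = (h : ℂ) • u := VA.L0op_homog u h hu
  rw [e1, e2, e3, VA.mode_zero_right, VA.mode_smul_left, sub_zero] at hb
  have e4 : (-((-2 : ℤ) : ℂ) - 1) = 1 := by norm_num
  rw [e4, one_smul] at hb
  rw [hb, show VA.Lneg1op u = VA.mode u (-2) VA.one from rfl, add_smul, one_smul]

lemma Lneg1op_proj (u : V) (h : ℤ) (hu : VA.proj h u = u) :
    VA.proj (h + 1) (VA.Lneg1op u) = VA.Lneg1op u := by
  have hL0 := VA.L0op_Lneg1op u h hu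
  have hz : ∀ μ : ℤ, μ ≠ h + 1 → VA.proj μ (VA.Lneg1op u) = 0 := by
    intro μ hμ
    have h1 := VA.proj_L0op (VA.Lneg1op u) μ
    rw [hL0, map_smul] at h1
    have h2 : ((μ : ℂ) - ((h : ℂ) + 1)) • VA.proj μ (VA.Lneg1op u) = 0 := by
      rw [sub_smul, ← h1, sub_self]
    rcases smul_eq_zero.mp h2 with hc | hv
    · exfalso
      apply hμ
      have h3 : (μ : ℂ) = ((h + 1 : ℤ) : ℂ) := by
        push_cast
        linear_combination hc
      exact_mod_cast h3
    · exact hv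
  conv_rhs => rw [← VA.proj_sum (VA.Lneg1op u)]
  exact (finsum_eq_single _ (h + 1) hz).symm

lemma key_id (N : ℕ) (u v : V) (h : ℤ) (hu : VA.proj h u = u) :
    (2 * (N : ℂ) + 2) • VA.resPow (-(2 * (N : ℤ)) - 3) N u v
      = VA.circN N (VA.Lneg1op u) v + ((h : ℂ) - (N : ℂ) - 1) • VA.circN N u v := by
  obtain ⟨K, hK⟩ := VA.exists_mode_bound u v (-(2 * (N : ℤ)) - 3)
  have hK2 : ∀ i : ℕ, K ≤ i → VA.mode u (-(2 * (N : ℤ)) - 2 + i) v = 0 := by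
    intro i hi
    have e : -(2 * (N : ℤ)) - 2 + (i : ℤ) = -(2 * (N : ℤ)) - 3 + ((i + 1 : ℕ) : ℤ) := by
      push_cast; ring
    rw [e]; exact hK (i + 1) (by omega)
  have hA : VA.resPow (-(2 * (N : ℤ)) - 3) N u v
      = ∑ i ∈ Finset.range (K + 1),
          cchoose ((N : ℤ) + h) i • VA.mode u (-(2 * (N : ℤ)) - 3 + i) v := by
    rw [VA.resPow_homog u v _ _ h hu]
    exact finsum_nat_eq_range _ _ (fun i hi => by rw [hK i (by omega), smul_zero])
  have hB : VA.circN N u v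
      = ∑ i ∈ Finset.range (K + 1),
          cchoose ((N : ℤ) + h) i • VA.mode u (-(2 * (N : ℤ)) - 2 + i) v := by
    rw [show VA.circN N u v = VA.resPow (-(2 * (N : ℤ)) - 2) N u v from rfl,
        VA.resPow_homog u v _ _ h hu]
    exact finsum_nat_eq_range _ _ (fun i hi => by rw [hK2 i (by omega), smul_zero])
  have hwproj : VA.proj (h + 1) (VA.Lneg1op u) = VA.Lneg1op u := VA.Lneg1op_proj u h hu
  have hterm : ∀ i : ℕ,
      cchoose ((N : ℤ) + (h + 1)) i • VA.mode (VA.Lneg1op u) (-(2 * (N : ℤ)) - 2 + i) v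
        = (cchoose (((N : ℤ) + h) + 1) i * (2 * (N : ℂ) + 2 - (i : ℂ)))
            • VA.mode u (-(2 * (N : ℤ)) - 3 + i) v := by
    intro i
    have hd := VA.Lneg1_deriv u v (-(2 * (N : ℤ)) - 2 + i)
    rw [show VA.Lneg1op u = VA.mode u (-2) VA.one from rfl, hd]
    have e1 : ((N : ℤ) + (h + 1)) = ((N : ℤ) + h) + 1 := by ring
    have e2 : (-(2 * (N : ℤ)) - 2 + (i : ℤ)) - 1 = -(2 * (N : ℤ)) - 3 + (i : ℤ) := by ring
    have e3 : (-((-(2 * (N : ℤ)) - 2 + (i : ℤ) : ℤ) : ℂ)) = 2 * (N : ℂ) + 2 - (i : ℂ) := by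
      push_cast; ring
    rw [e1, e2, e3, smul_smul]
  have hC : VA.circN N (VA.Lneg1op u) v
      = ∑ i ∈ Finset.range (K + 1),
          (cchoose (((N : ℤ) + h) + 1) i * (2 * (N : ℂ) + 2 - (i : ℂ)))
            • VA.mode u (-(2 * (N : ℤ)) - 3 + i) v := by
    rw [show VA.circN N (VA.Lneg1op u) v = VA.resPow (-(2 * (N : ℤ)) - 2) N (VA.Lneg1op u) v
        from rfl, VA.resPow_homog _ v _ _ (h + 1) hwproj]
    simp only [hterm]
    exact finsum_nat_eq_range _ _ (fun i hi => by rw [hK i (by omega), smul_zero])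
  rw [hA, hB, hC, Finset.smul_sum, Finset.smul_sum]
  have hshift : (∑ i ∈ Finset.range (K + 1), ((h : ℂ) - (N : ℂ) - 1)
        • (cchoose ((N : ℤ) + h) i • VA.mode u (-(2 * (N : ℤ)) - 2 + i) v))
      = ∑ i ∈ Finset.range (K + 1), ((h : ℂ) - (N : ℂ) - 1)
        • ((if i = 0 then (0 : ℂ) else cchoose ((N : ℤ) + h) (i - 1))
            • VA.mode u (-(2 * (N : ℤ)) - 3 + i) v) := by
    set f : ℕ → V := fun i => ((h : ℂ) - (N : ℂ) - 1)
        • ((if i = 0 then (0 : ℂ) else cchoose ((N : ℤ) + h) (i - 1))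
            • VA.mode u (-(2 * (N : ℤ)) - 3 + i) v) with hf
    have h1 := Finset.sum_range_succ' f (K + 1)
    have h2 := Finset.sum_range_succ f (K + 1)
    have hf0 : f 0 = 0 := by simp [hf]
    have hfK : f (K + 1) = 0 := by
      simp only [hf]
      rw [hK (K + 1) (by omega), smul_zero, smul_zero]
    have hfs : ∀ i : ℕ, f (i + 1) = ((h : ℂ) - (N : ℂ) - 1)
        • (cchoose ((N : ℤ) + h) i • VA.mode u (-(2 * (N : ℤ)) - 2 + i) v) := by
      intro i
      simp only [hf, Nat.succ_ne_zero, if_false, Nat.add_sub_cancel]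
      have e : -(2 * (N : ℤ)) - 3 + ((i + 1 : ℕ) : ℤ) = -(2 * (N : ℤ)) - 2 + (i : ℤ) := by
        push_cast; ring
      rw [e]
    calc (∑ i ∈ Finset.range (K + 1), ((h : ℂ) - (N : ℂ) - 1)
          • (cchoose ((N : ℤ) + h) i • VA.mode u (-(2 * (N : ℤ)) - 2 + i) v))
        = ∑ i ∈ Finset.range (K + 1), f (i + 1) := by
          exact Finset.sum_congr rfl fun i _ => (hfs i).symm
      _ = ∑ i ∈ Finset.range (K + 2), f i := by rw [h1, hf0, add_zero]
      _ = ∑ i ∈ Finset.range (K + 1), f i := by rw [h2, hfK, add_zero]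
  rw [hshift, ← Finset.sum_add_distrib]
  refine Finset.sum_congr rfl fun i _ => ?_
  rw [smul_smul, smul_smul, ← add_smul]
  congr 1
  cases i with
  | zero => simp [cchoose_zero']
  | succ j =>
      have P := cchoose_pascal ((N : ℤ) + h) j
      have A := cchoose_absorb ((N : ℤ) + h) j
      simp only [Nat.succ_ne_zero, if_false, Nat.add_sub_cancel]
      push_cast at A ⊢
      linear_combination (-(2 * (N : ℂ) + 1 - (j : ℂ))) * P + A

lemma circN_mem (N : ℕ) (u v : V) : VA.circN N u v ∈ VA.ZhuO N := by
  have : VA.circN N u v = VA.resPow (-(2 * (N : ℤ)) - 2) N u v := rfl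
  rw [this]
  apply VA.resPow_mem
  intro m
  apply Submodule.subset_span
  left
  exact ⟨VA.proj m u, v, ⟨m, by simp [VA.proj_idem]⟩, rfl⟩

lemma resPow_three_mem (N : ℕ) (u v : V) :
    VA.resPow (-(2 * (N : ℤ)) - 3) N u v ∈ VA.ZhuO N := by
  apply VA.resPow_mem
  intro m
  have h2 : (2 * (N : ℂ) + 2) ≠ 0 := by
    have : ((2 * N + 2 : ℕ) : ℂ) ≠ 0 := Nat.cast_ne_zero.mpr (by omega)
    push_cast at this
    convert this using 1
  have hm : VA.proj m (VA.proj m u) = VA.proj m u := by simp [VA.proj_idem]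
  have hk := VA.key_id N (VA.proj m u) v m hm
  have hrw : VA.resPow (-(2 * (N : ℤ)) - 3) N (VA.proj m u) v
      = (2 * (N : ℂ) + 2)⁻¹ • (VA.circN N (VA.Lneg1op (VA.proj m u)) v
          + ((m : ℂ) - (N : ℂ) - 1) • VA.circN N (VA.proj m u) v) := by
    rw [← hk, smul_smul, inv_mul_cancel₀ h2, one_smul]
  rw [hrw]
  apply Submodule.smul_mem
  apply Submodule.add_mem
  · apply Submodule.subset_span
    left
    exact ⟨VA.Lneg1op (VA.proj m u), v, ⟨m + 1, VA.Lneg1op_proj _ m hm⟩, rfl⟩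
  · exact Submodule.smul_mem _ _ (Submodule.subset_span
      (Or.inl ⟨VA.proj m u, v, ⟨m, hm⟩, rfl⟩))

end GRVertexAlgebra

end StarNAux

lemma starN_coeff_id (N m : ℕ) :
    (if m = 0 then (0 : ℂ)
      else (-1 : ℂ) ^ (m - 1) * ((((m - 1) + (N + 1)).choose (N + 1) : ℕ) : ℂ))
      + (-1 : ℂ) ^ m * (((m + (N + 1)).choose (N + 1) : ℕ) : ℂ)
    = (-1 : ℂ) ^ m * (((m + N).choose N : ℕ) : ℂ) := by
  cases m with
  | zero => simp
  | succ j =>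
      simp only [Nat.succ_ne_zero, if_false, Nat.add_sub_cancel]
      have hp : (j + 1 + (N + 1)).choose (N + 1)
          = (j + (N + 1)).choose N + (j + (N + 1)).choose (N + 1) := by
        rw [show j + 1 + (N + 1) = (j + (N + 1)) + 1 from by ring]
        exact Nat.choose_succ_succ _ _
      have hq : (j + 1 + N).choose N = (j + (N + 1)).choose N := by
        congr 1
        ring
      rw [hp, hq]
      push_cast
      ring

lemma starN_sum_rearrange {W : Type*} [AddCommGroup W] [Module ℂ W] (N : ℕ)
    (a c : ℕ → ℂ) (R : ℕ → W)
    (hac : ∀ m : ℕ, (if m = 0 then (0 : ℂ) else a (m - 1)) + a m = c m) :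
    (∑ m ∈ Finset.range (N + 2), a m • (R (m + 1) + R m))
      - ∑ m ∈ Finset.range (N + 1), c m • R m
    = c (N + 1) • R (N + 1) + (c (N + 2) - a (N + 2)) • R (N + 2) := by
  have h1 : (∑ m ∈ Finset.range (N + 2), a m • (R (m + 1) + R m))
      = ∑ m ∈ Finset.range (N + 2), a m • R (m + 1)
        + ∑ m ∈ Finset.range (N + 2), a m • R m := by
    rw [← Finset.sum_add_distrib]
    exact Finset.sum_congr rfl fun m _ => smul_add _ _ _
  set gs : ℕ → ℂ := fun m => if m = 0 then 0 else a (m - 1) with hgs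
  have h2 : (∑ m ∈ Finset.range (N + 2), a m • R (m + 1))
      = ∑ m ∈ Finset.range (N + 3), gs m • R m := by
    rw [Finset.sum_range_succ' (fun m => gs m • R m) (N + 2)]
    simp only [hgs, Nat.succ_ne_zero, if_false, if_true, Nat.add_sub_cancel, zero_smul,
      add_zero]
  have h3 : (∑ m ∈ Finset.range (N + 2), a m • R m)
      = ∑ m ∈ Finset.range (N + 3), a m • R m - a (N + 2) • R (N + 2) := by
    conv_rhs => rw [Finset.sum_range_succ]
    abel
  have h4 : (∑ m ∈ Finset.range (N + 1), c m • R m)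
      = ∑ m ∈ Finset.range (N + 3), c m • R m - c (N + 2) • R (N + 2)
        - c (N + 1) • R (N + 1) := by
    conv_rhs => rw [Finset.sum_range_succ, Finset.sum_range_succ]
    abel
  have h5 : (∑ m ∈ Finset.range (N + 3), gs m • R m)
      + (∑ m ∈ Finset.range (N + 3), a m • R m)
      = ∑ m ∈ Finset.range (N + 3), c m • R m := by
    rw [← Finset.sum_add_distrib]
    refine Finset.sum_congr rfl fun m _ => ?_
    rw [← add_smul, hac m]
  have h6 : (∑ m ∈ Finset.range (N + 3), gs m • R m)
      = ∑ m ∈ Finset.range (N + 3), c m • R m - ∑ m ∈ Finset.range (N + 3), a m • R m := by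
    rw [← h5]
    abel
  rw [h1, h2, h3, h4, h6, sub_smul]
  abel

/-- Let `V` be a vertex operator algebra and `n > 0`.  Then for all `u, v ∈ V`,
`u *_n v ≡ u *_{n-1} v` modulo `O_{n-1}(V)`. -/
theorem starN_congr_mod_ZhuO {V : Type} [AddCommGroup V] [Module ℂ V]
    (VA : VertexOperatorAlgebra V) (n : ℕ) (hn : 0 < n) (u v : V) :
    VA.starN n u v - VA.starN (n - 1) u v ∈ VA.ZhuO (n - 1) := by
  obtain ⟨N, rfl⟩ : ∃ N : ℕ, n = N + 1 := ⟨n - 1, (Nat.succ_pred_eq_of_pos hn).symm⟩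
  simp only [Nat.add_sub_cancel]
  have key : (∑ m ∈ Finset.range (N + 2),
        ((-1 : ℂ) ^ m * (((m + (N + 1)).choose (N + 1) : ℕ) : ℂ))
          • (VA.toGRVertexAlgebra.resPow (-(N : ℤ) - ((m + 1 : ℕ) : ℤ) - 1) (N : ℤ) u v
              + VA.toGRVertexAlgebra.resPow (-(N : ℤ) - (m : ℤ) - 1) (N : ℤ) u v))
      - (∑ m ∈ Finset.range (N + 1),
        ((-1 : ℂ) ^ m * (((m + N).choose N : ℕ) : ℂ))
          • VA.toGRVertexAlgebra.resPow (-(N : ℤ) - (m : ℤ) - 1) (N : ℤ) u v)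
      = ((-1 : ℂ) ^ (N + 1) * ((((N + 1) + N).choose N : ℕ) : ℂ))
          • VA.toGRVertexAlgebra.resPow (-(N : ℤ) - ((N + 1 : ℕ) : ℤ) - 1) (N : ℤ) u v
        + (((-1 : ℂ) ^ (N + 2) * ((((N + 2) + N).choose N : ℕ) : ℂ))
            - ((-1 : ℂ) ^ (N + 2) * ((((N + 2) + (N + 1)).choose (N + 1) : ℕ) : ℂ)))
          • VA.toGRVertexAlgebra.resPow (-(N : ℤ) - ((N + 2 : ℕ) : ℤ) - 1) (N : ℤ) u v :=
    starN_sum_rearrange N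
      (fun m => (-1 : ℂ) ^ m * (((m + (N + 1)).choose (N + 1) : ℕ) : ℂ))
      (fun m => (-1 : ℂ) ^ m * (((m + N).choose N : ℕ) : ℂ))
      (fun d => VA.toGRVertexAlgebra.resPow (-(N : ℤ) - (d : ℤ) - 1) (N : ℤ) u v)
      (fun m => starN_coeff_id N m)
  have e1 : VA.toGRVertexAlgebra.starN (N + 1) u v
      = ∑ m ∈ Finset.range (N + 2),
          ((-1 : ℂ) ^ m * (((m + (N + 1)).choose (N + 1) : ℕ) : ℂ))
            • (VA.toGRVertexAlgebra.resPow (-(N : ℤ) - ((m + 1 : ℕ) : ℤ) - 1) (N : ℤ) u v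
                + VA.toGRVertexAlgebra.resPow (-(N : ℤ) - (m : ℤ) - 1) (N : ℤ) u v) := by
    rw [show VA.toGRVertexAlgebra.starN (N + 1) u v
        = ∑ m ∈ Finset.range (N + 2),
            ((-1 : ℂ) ^ m * (((m + (N + 1)).choose (N + 1) : ℕ) : ℂ))
              • VA.toGRVertexAlgebra.resPow (-((N + 1 : ℕ) : ℤ) - m - 1) ((N + 1 : ℕ) : ℤ) u v
        from rfl]
    refine Finset.sum_congr rfl fun m _ => ?_
    congr 1
    have e2 : (-((N + 1 : ℕ) : ℤ) - (m : ℤ) - 1) = (-(N : ℤ) - ((m + 1 : ℕ) : ℤ) - 1) := by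
      push_cast; ring
    have e3 : ((N + 1 : ℕ) : ℤ) = (N : ℤ) + 1 := by push_cast; ring
    rw [e2, e3, VA.toGRVertexAlgebra.resPow_l_succ]
    congr 1
    have e4 : (-(N : ℤ) - ((m + 1 : ℕ) : ℤ) - 1 + 1) = (-(N : ℤ) - (m : ℤ) - 1) := by
      push_cast; ring
    rw [e4]
  have e5 : VA.toGRVertexAlgebra.starN N u v
      = ∑ m ∈ Finset.range (N + 1),
          ((-1 : ℂ) ^ m * (((m + N).choose N : ℕ) : ℂ))
            • VA.toGRVertexAlgebra.resPow (-(N : ℤ) - (m : ℤ) - 1) (N : ℤ) u v := rfl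
  rw [e1, e5, key]
  refine Submodule.add_mem _ (Submodule.smul_mem _ _ ?_) (Submodule.smul_mem _ _ ?_)
  · have e : (-(N : ℤ) - ((N + 1 : ℕ) : ℤ) - 1) = -(2 * (N : ℤ)) - 2 := by push_cast; ring
    rw [e]
    exact VA.toGRVertexAlgebra.circN_mem N u v
  · have e : (-(N : ℤ) - ((N + 2 : ℕ) : ℤ) - 1) = -(2 * (N : ℤ)) - 3 := by push_cast; ring
    rw [e]
    exact VA.toGRVertexAlgebra.resPow_three_mem N u v
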